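/- Let X and Y be compact metric spaces. For every x ∈ X there exists y ∈ Y such that the pointed Gromov-Hausdorff distance satisfies d_GH((X,x),(Y,y)) ≤ 2·d_GH(X,Y). -/
import Mathlib


/-- An admissible metric on the disjoint union `X ⊕ Y`: a metric restricting to the given
metrics on `X` and on `Y`. -/
structure AdmissibleDist (X Y : Type*) [MetricSpace X] [MetricSpace Y] where
  d : X ⊕ Y → X ⊕ Y → ℝ
  symm : ∀ a b, d a b = d b a
  refl : ∀ a, d a a = 0
  eq_of_d_eq_zero : ∀ a b, d a b = 0 → a = b
  triangle : ∀ a b c, d a c ≤ d a b + d b c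
  restrict_left : ∀ x x' : X, d (Sum.inl x) (Sum.inl x') = dist x x'
  restrict_right : ∀ y y' : Y, d (Sum.inr y) (Sum.inr y') = dist y y'

/-- The Hausdorff distance between `X` and `Y` inside `X ⊕ Y`, with respect to an admissible
metric `D`. -/
noncomputable def hausdorffDistD {X Y : Type*} [MetricSpace X] [MetricSpace Y]
    (D : AdmissibleDist X Y) : ℝ :=
  sInf {ε : ℝ | 0 < ε ∧ (∀ x : X, ∃ y : Y, D.d (Sum.inl x) (Sum.inr y) < ε) ∧
    (∀ y : Y, ∃ x : X, D.d (Sum.inl x) (Sum.inr y) < ε)}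

/-- The pointed Gromov-Hausdorff distance of `(X, p)` and `(Y, q)`. -/
noncomputable def pGHDist (X Y : Type*) [MetricSpace X] [MetricSpace Y] (p : X) (q : Y) : ℝ :=
  sInf {r : ℝ | ∃ D : AdmissibleDist X Y, r = hausdorffDistD D + D.d (Sum.inl p) (Sum.inr q)}

section Aux
open GromovHausdorff Metric Set

theorem stmt5' {X Y : Type*} [MetricSpace X] [MetricSpace Y]
    [CompactSpace X] [Nonempty X] [CompactSpace Y] [Nonempty Y] (x : X) :
    ∃ y : Y, pGHDist X Y x y ≤ 2 * GromovHausdorff.ghDist X Y := by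
  set Φ := optimalGHInjl X Y with hΦ
  set Ψ := optimalGHInjr X Y with hΨ
  have hΦi : Isometry Φ := isometry_optimalGHInjl X Y
  have hΨi : Isometry Ψ := isometry_optimalGHInjr X Y
  have hcΨ : IsCompact (range Ψ) := isCompact_range hΨi.continuous
  have hcΦ : IsCompact (range Φ) := isCompact_range hΦi.continuous
  have hne : EMetric.hausdorffEdist (range Φ) (range Ψ) ≠ ⊤ :=
    hausdorffEdist_ne_top_of_nonempty_of_bounded (range_nonempty _) (range_nonempty _)
      hcΦ.isBounded hcΨ.isBounded
  have hgh : hausdorffDist (range Φ) (range Ψ) = ghDist X Y := hausdorffDist_optimal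
  -- every point of range Φ has a point of range Ψ within ghDist, and vice versa
  have key : ∀ a : X, ∃ b : Y, dist (Φ a) (Ψ b) ≤ ghDist X Y := by
    intro a
    obtain ⟨z, ⟨b, rfl⟩, hz⟩ := hcΨ.exists_infDist_eq_dist (range_nonempty _) (Φ a)
    exact ⟨b, by rw [← hz, ← hgh]; exact infDist_le_hausdorffDist_of_mem ⟨a, rfl⟩ hne⟩
  have key' : ∀ b : Y, ∃ a : X, dist (Φ a) (Ψ b) ≤ ghDist X Y := by
    intro b
    obtain ⟨z, ⟨a, rfl⟩, hz⟩ := hcΦ.exists_infDist_eq_dist (range_nonempty _) (Ψ b)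
    refine ⟨a, ?_⟩
    rw [dist_comm, ← hz, ← hgh, hausdorffDist_comm]
    exact infDist_le_hausdorffDist_of_mem ⟨b, rfl⟩ (by rwa [EMetric.hausdorffEdist_comm])
  obtain ⟨y, hy⟩ := key x
  have ghnn : 0 ≤ ghDist X Y := by rw [← hgh]; exact hausdorffDist_nonneg
  refine ⟨y, ?_⟩
  -- suffices: for all δ > 0, pGHDist ≤ 2 ghDist + 2 δ
  have main : ∀ δ : ℝ, 0 < δ → pGHDist X Y x y ≤ 2 * ghDist X Y + 2 * δ := by
    intro δ hδ
    -- the admissible distance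
    set f : X ⊕ Y → X ⊕ Y → ℝ := fun a b =>
      match a, b with
      | Sum.inl a, Sum.inl b => dist a b
      | Sum.inl a, Sum.inr b => dist (Φ a) (Ψ b) + δ
      | Sum.inr a, Sum.inl b => dist (Φ b) (Ψ a) + δ
      | Sum.inr a, Sum.inr b => dist a b
      with hf
    have ftri : ∀ a b c, f a c ≤ f a b + f b c := by
      rintro (a | a) (b | b) (c | c) <;> simp only [hf]
      · exact dist_triangle a b c
      · rw [← hΦi.dist_eq a b]; linarith [dist_triangle (Φ a) (Φ b) (Ψ c)]
      · rw [← hΦi.dist_eq a c]; linarith [dist_triangle (Φ a) (Ψ b) (Φ c),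
          dist_comm (Ψ b) (Φ c)]
      · rw [← hΨi.dist_eq b c] ; linarith [dist_triangle (Φ a) (Ψ b) (Ψ c)]
      · rw [← hΦi.dist_eq b c]; linarith [dist_triangle (Φ c) (Φ b) (Ψ a),
          dist_comm (Φ c) (Φ b)]
      · rw [← hΨi.dist_eq a c]; linarith [dist_triangle (Ψ a) (Φ b) (Ψ c),
          dist_comm (Ψ a) (Φ b)]
      · rw [← hΨi.dist_eq a b]; linarith [dist_triangle (Φ c) (Ψ b) (Ψ a),
          dist_comm (Φ c) (Ψ a), dist_comm (Ψ b) (Ψ a), dist_comm (Φ c) (Ψ b)]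
      · exact dist_triangle a b c
    set D : AdmissibleDist X Y :=
      { d := f
        symm := by rintro (a | a) (b | b) <;> simp [hf, dist_comm]
        refl := by rintro (a | a) <;> simp [hf]
        eq_of_d_eq_zero := by
          rintro (a | a) (b | b) h <;> simp only [hf] at h
          · rw [dist_eq_zero.1 h]
          · exfalso
            have h0 : (0:ℝ) < dist (Φ a) (Ψ b) + δ := by positivity
            linarith
          · exfalso
            have h0 : (0:ℝ) < dist (Φ b) (Ψ a) + δ := by positivity
            linarith
          · rw [dist_eq_zero.1 h]
        triangle := ftri
        restrict_left := fun _ _ => rfl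
        restrict_right := fun _ _ => rfl } with hD
    have hHD : hausdorffDistD D ≤ ghDist X Y + δ := by
      apply le_of_forall_gt_imp_ge_of_dense
      intro ε hε
      apply csInf_le
      · exact ⟨0, fun r hr => hr.1.le⟩
      · simp only [Set.mem_setOf_eq]
        refine ⟨by linarith, fun a => ?_, fun b => ?_⟩
        · obtain ⟨b, hb⟩ := key a
          refine ⟨b, ?_⟩
          show dist (Φ a) (Ψ b) + δ < ε
          linarith
        · obtain ⟨a, ha⟩ := key' b
          refine ⟨a, ?_⟩
          show dist (Φ a) (Ψ b) + δ < ε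
          linarith
    have hpt : D.d (Sum.inl x) (Sum.inr y) ≤ ghDist X Y + δ := by
      show dist (Φ x) (Ψ y) + δ ≤ _
      linarith
    have hmem : hausdorffDistD D + D.d (Sum.inl x) (Sum.inr y) ∈
        {r : ℝ | ∃ D' : AdmissibleDist X Y,
          r = hausdorffDistD D' + D'.d (Sum.inl x) (Sum.inr y)} := ⟨D, rfl⟩
    have hbdd : BddBelow {r : ℝ | ∃ D' : AdmissibleDist X Y,
        r = hausdorffDistD D' + D'.d (Sum.inl x) (Sum.inr y)} := by
      refine ⟨0, ?_⟩
      rintro r ⟨D', rfl⟩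
      have h1 : 0 ≤ hausdorffDistD D' :=
        Real.sInf_nonneg (fun r hr => hr.1.le)
      have h2 : 0 ≤ D'.d (Sum.inl x) (Sum.inr y) := by
        have := D'.triangle (Sum.inl x) (Sum.inr y) (Sum.inl x)
        rw [D'.refl, D'.symm (Sum.inr y) (Sum.inl x)] at this
        linarith
      linarith
    calc pGHDist X Y x y ≤ hausdorffDistD D + D.d (Sum.inl x) (Sum.inr y) :=
          csInf_le hbdd hmem
      _ ≤ 2 * ghDist X Y + 2 * δ := by linarith
  refine le_of_forall_pos_le_add fun ε hε => ?_
  have := main (ε / 2) (by linarith)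
  linarith

end Aux

/-- For every base point `x ∈ X` there is a base point `y ∈ Y` such that the pointed
Gromov-Hausdorff distance is at most twice the non-pointed one. -/
theorem stmt5 {X Y : Type*} [MetricSpace X] [MetricSpace Y]
    [CompactSpace X] [Nonempty X] [CompactSpace Y] [Nonempty Y] (x : X) :
    ∃ y : Y, pGHDist X Y x y ≤ 2 * GromovHausdorff.ghDist X Y := stmt5' x
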